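/- arXiv:1508.01097 — 3 statements merged into one kernel-verified Lean document; each statement's English description precedes it below -/
import Mathlib

section
/- Let P be a finite set of points in the plane, let L be a line containing at least (k−2 choose 2) + 2 points of P with k ≥ 2, and let P' = P \ L be the points not on L. Then P contains a subset of size k in general position if and only if P' contains a subset of size k−2 in general position. -/
/-- A set of points in the plane is in general position if no three
distinct points of it are collinear. -/
def GenPos (S : Set (ℝ × ℝ)) : Prop :=
  ∀ a ∈ S, ∀ b ∈ S, ∀ c ∈ S, a ≠ b → a ≠ c → b ≠ c →
    ¬ Collinear ℝ ({a, b, c} : Set (ℝ × ℝ))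

/-- A line in the plane. -/
def IsLine (L : Set (ℝ × ℝ)) : Prop :=
  ∃ a v : ℝ × ℝ, v ≠ 0 ∧ L = {p | ∃ t : ℝ, p = a + t • v}

/-- The minimum number of lines needed to cover all points of `P`. -/
noncomputable def lineCoverNumber (P : Set (ℝ × ℝ)) : ℕ :=
  sInf {m | ∃ 𝓛 : Finset (Set (ℝ × ℝ)), 𝓛.card = m ∧
    (∀ L ∈ 𝓛, IsLine L) ∧ P ⊆ ⋃ L ∈ 𝓛, L}


-- a parametric line is an actual collinear set
lemma line_collinear {L : Set (ℝ × ℝ)} (hL : ∃ a v : ℝ × ℝ, v ≠ 0 ∧ L = {p | ∃ t : ℝ, p = a + t • v}) :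
    Collinear ℝ L := by
  obtain ⟨a, v, hv, rfl⟩ := hL
  rw [collinear_iff_of_mem (show a ∈ {p : ℝ×ℝ | ∃ t : ℝ, p = a + t • v} from ⟨0, by simp⟩)]
  exact ⟨v, fun p ⟨t, ht⟩ => ⟨t, by simp [ht, add_comm]⟩⟩

lemma coll_param {s t x : ℝ × ℝ} (hst : s ≠ t) (h : Collinear ℝ {s, t, x}) :
    ∃ c : ℝ, x = s + c • (t - s) := by
  rw [collinear_iff_of_mem (show s ∈ ({s,t,x} : Set (ℝ×ℝ)) by simp)] at h
  obtain ⟨v, hv⟩ := h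
  obtain ⟨r1, ht⟩ := hv t (by simp)
  obtain ⟨r2, hx⟩ := hv x (by simp)
  have hr1 : r1 ≠ 0 := by rintro rfl; simp at ht; exact hst ht.symm
  refine ⟨r2 / r1, ?_⟩
  have : t - s = r1 • v := by simp [ht]
  rw [this, smul_smul, div_mul_cancel₀ _ hr1]
  simpa [add_comm] using hx

lemma coll_of_param {s t x : ℝ × ℝ} (c : ℝ) (h : x = s + c • (t - s)) :
    Collinear ℝ {s, t, x} := by
  rw [collinear_iff_of_mem (show s ∈ ({s,t,x} : Set (ℝ×ℝ)) by simp)]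
  refine ⟨t - s, fun p hp => ?_⟩
  simp only [Set.mem_insert_iff, Set.mem_singleton_iff] at hp
  rcases hp with rfl | rfl | rfl
  · exact ⟨0, by simp⟩
  · exact ⟨1, by simp⟩
  · exact ⟨c, by rw [h]; simp [add_comm]⟩

-- a point collinear with two distinct points of a line is on the line
lemma mem_line_param {L : Set (ℝ × ℝ)} (hL : ∃ a v : ℝ × ℝ, v ≠ 0 ∧ L = {p | ∃ t : ℝ, p = a + t • v})
    {p q x : ℝ × ℝ} (hp : p ∈ L) (hq : q ∈ L) (c : ℝ) (hx : x = p + c • (q - p)) :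
    x ∈ L := by
  obtain ⟨a, v, hv, rfl⟩ := hL
  obtain ⟨t1, hp⟩ := hp
  obtain ⟨t2, hq⟩ := hq
  refine ⟨t1 + c * (t2 - t1), ?_⟩
  rw [hx, hp, hq]
  module

lemma pair_line_not_coll {L : Set (ℝ × ℝ)}
    (hL : ∃ a v : ℝ × ℝ, v ≠ 0 ∧ L = {p | ∃ t : ℝ, p = a + t • v})
    {p q s : ℝ × ℝ} (hp : p ∈ L) (hq : q ∈ L) (hpq : p ≠ q) (hs : s ∉ L) :
    ¬ Collinear ℝ {p, q, s} := by
  intro h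
  obtain ⟨c, hc⟩ := coll_param hpq h
  exact hs (mem_line_param hL hp hq c hc)

-- the set of points on L collinear with two given distinct points off L is a subsingleton
lemma bad_subsingleton {L : Set (ℝ × ℝ)}
    (hL : ∃ a v : ℝ × ℝ, v ≠ 0 ∧ L = {p | ∃ t : ℝ, p = a + t • v})
    {s t : ℝ × ℝ} (hs : s ∉ L) (hst : s ≠ t) :
    {x | x ∈ L ∧ Collinear ℝ {s, t, x}}.Subsingleton := by
  rintro x ⟨hxL, hxc⟩ y ⟨hyL, hyc⟩
  by_contra hxy
  obtain ⟨c1, hc1⟩ := coll_param hst hxc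
  obtain ⟨c2, hc2⟩ := coll_param hst hyc
  have hcc : c2 - c1 ≠ 0 := by
    intro h
    apply hxy
    have : c1 = c2 := by linarith [sub_eq_zero.mp h]
    rw [hc1, hc2, this]
  apply hs
  refine mem_line_param hL hxL hyL (-c1 / (c2 - c1)) ?_
  rw [hc1, hc2]
  match_scalars <;> field_simp <;> ring

lemma triple_eq₁ (a b c : ℝ × ℝ) : ({a, b, c} : Set (ℝ×ℝ)) = {b, a, c} := Set.insert_comm _ _ _
lemma triple_eq₂ (a b c : ℝ × ℝ) : ({a, b, c} : Set (ℝ×ℝ)) = {a, c, b} := by rw [Set.pair_comm]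
lemma triple_eq₃ (a b c : ℝ × ℝ) : ({a, b, c} : Set (ℝ×ℝ)) = {c, a, b} := by
  rw [triple_eq₂, triple_eq₁]

lemma genPos_insert_insert {p q : ℝ × ℝ} {S : Set (ℝ × ℝ)} (hpq : p ≠ q)
    (hS : GenPos S)
    (h1 : ∀ s ∈ S, ¬ Collinear ℝ {p, q, s})
    (h2 : ∀ s ∈ S, ∀ t ∈ S, s ≠ t → ¬ Collinear ℝ {p, s, t})
    (h3 : ∀ s ∈ S, ∀ t ∈ S, s ≠ t → ¬ Collinear ℝ {q, s, t}) :
    GenPos (insert p (insert q S)) := by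
  intro a ha b hb c hc hab hac hbc
  simp only [Set.mem_insert_iff] at ha hb hc
  rcases ha with rfl | rfl | ha <;> rcases hb with rfl | rfl | hb <;>
    rcases hc with rfl | rfl | hc
  · exact absurd rfl hab
  · exact absurd rfl hab
  · exact absurd rfl hab
  · exact absurd rfl hac
  · exact absurd rfl hbc
  · exact h1 c hc
  · exact absurd rfl hac
  · rw [triple_eq₂]; exact h1 b hb
  · exact h2 b hb c hc hbc
  · exact absurd rfl hbc
  · exact absurd rfl hac
  · rw [triple_eq₁]; exact h1 c hc
  · exact absurd rfl hab
  · exact absurd rfl hab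
  · exact absurd rfl hab
  · rw [triple_eq₃]; exact h1 b hb
  · exact absurd rfl hac
  · exact h3 b hb c hc hbc
  · exact absurd rfl hbc
  · rw [triple_eq₃, triple_eq₃]; exact h1 a ha
  · rw [triple_eq₁]; exact h2 a ha c hc hac
  · rw [triple_eq₃, triple_eq₂]; exact h1 a ha
  · exact absurd rfl hbc
  · rw [triple_eq₁]; exact h3 a ha c hc hac
  · rw [triple_eq₃]; exact h2 a ha b hb hab
  · rw [triple_eq₃]; exact h3 a ha b hb hab
  · exact hS a ha b hb c hc hab hac hbc

lemma genPos'_mono {S' S : Set (ℝ × ℝ)} (h : S' ⊆ S) (hg : GenPos S) : GenPos S' :=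
  fun a ha b hb c hc => hg a (h ha) b (h hb) c (h hc)


theorem stmt_4 (P : Set (ℝ × ℝ)) (hP : P.Finite) (k : ℕ) (hk : 2 ≤ k)
    (L : Set (ℝ × ℝ)) (hL : IsLine L)
    (hmany : (k - 2).choose 2 + 2 ≤ (P ∩ L).ncard) :
    (∃ S ⊆ P, GenPos S ∧ S.ncard = k) ↔
      (∃ S ⊆ P \ L, GenPos S ∧ S.ncard = k - 2) := by
  have hL : ∃ a v : ℝ × ℝ, v ≠ 0 ∧ L = {p | ∃ t : ℝ, p = a + t • v} := hL

  classical
  constructor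
  · rintro ⟨S, hSP, hgp, hcard⟩
    have hSfin : S.Finite := hP.subset hSP
    have h2le : (S ∩ L).ncard ≤ 2 := by
      by_contra h
      push_neg at h
      obtain ⟨T, hTsub, hT3⟩ := Set.exists_subset_card_eq (show 3 ≤ (S ∩ L).ncard from h)
      obtain ⟨x, y, z, hxy, hxz, hyz, rfl⟩ := Set.ncard_eq_three.mp hT3
      have hx := hTsub (show x ∈ ({x,y,z} : Set (ℝ×ℝ)) by simp)
      have hy := hTsub (show y ∈ ({x,y,z} : Set (ℝ×ℝ)) by simp)
      have hz := hTsub (show z ∈ ({x,y,z} : Set (ℝ×ℝ)) by simp)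
      refine hgp x hx.1 y hy.1 z hz.1 hxy hxz hyz ((line_collinear hL).subset ?_)
      rintro w hw
      simp only [Set.mem_insert_iff, Set.mem_singleton_iff] at hw
      rcases hw with rfl | rfl | rfl
      · exact hx.2
      · exact hy.2
      · exact hz.2
    have hdiff : k - 2 ≤ (S \ L).ncard := by
      have he : S \ L = S \ (S ∩ L) := by rw [Set.diff_self_inter]
      rw [he, Set.ncard_diff Set.inter_subset_left (hSfin.subset Set.inter_subset_left), hcard]
      omega
    obtain ⟨S', hS'sub, hS'card⟩ := Set.exists_subset_card_eq hdiff
    exact ⟨S', hS'sub.trans (Set.diff_subset_diff_left hSP),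
      genPos'_mono (hS'sub.trans Set.diff_subset) hgp, hS'card⟩
  · rintro ⟨S, hSPL, hgp, hcard⟩
    have hSfin : S.Finite := hP.subset (hSPL.trans Set.diff_subset)
    have hSnotL : ∀ s ∈ S, s ∉ L := fun s hs => (hSPL hs).2
    set SF := hSfin.toFinset with hSF
    have hSFcard : SF.card = k - 2 := by
      rw [hSF, ← Set.ncard_eq_toFinset_card _ hSfin, hcard]
    set badSet : Finset (ℝ × ℝ) → Set (ℝ × ℝ) :=
      fun e => {x | (x ∈ P ∧ x ∈ L) ∧ ∃ s ∈ e, ∃ t ∈ e, s ≠ t ∧ Collinear ℝ {s, t, x}}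
      with hbadSet
    have hbadfin : ∀ e, (badSet e).Finite := fun e => hP.subset fun x hx => hx.1.1
    set BadF : Finset (ℝ × ℝ) := (SF.powersetCard 2).biUnion (fun e => (hbadfin e).toFinset)
      with hBadF
    have hBadcard : BadF.card ≤ (k - 2).choose 2 := by
      calc BadF.card ≤ ∑ e ∈ SF.powersetCard 2, ((hbadfin e).toFinset).card :=
            Finset.card_biUnion_le
        _ ≤ ∑ _e ∈ SF.powersetCard 2, 1 := Finset.sum_le_sum (fun e he => ?_)
        _ = (SF.powersetCard 2).card := by simp
        _ = (k - 2).choose 2 := by rw [Finset.card_powersetCard, hSFcard]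
      rw [Finset.mem_powersetCard] at he
      obtain ⟨hesub, hecard⟩ := he
      obtain ⟨s₀, t₀, hst, rfl⟩ := Finset.card_eq_two.mp hecard
      have hs₀S : s₀ ∈ S := hSfin.mem_toFinset.mp (hesub (by simp))
      have hsub : badSet {s₀, t₀} ⊆ {x | x ∈ L ∧ Collinear ℝ {s₀, t₀, x}} := by
        rintro x ⟨⟨hxP, hxL⟩, s, hs, t, ht, hst', hcol⟩
        simp only [Finset.mem_insert, Finset.mem_singleton] at hs ht
        refine ⟨hxL, ?_⟩
        rcases hs with rfl | rfl <;> rcases ht with rfl | rfl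
        · exact absurd rfl hst'
        · exact hcol
        · rw [triple_eq₁]; exact hcol
        · exact absurd rfl hst'
      have hss : (badSet {s₀, t₀}).Subsingleton :=
        (bad_subsingleton hL (hSnotL _ hs₀S) hst).anti hsub
      rw [Finset.card_le_one]
      intro a hamem b hbmem
      exact hss ((hbadfin _).mem_toFinset.mp hamem) ((hbadfin _).mem_toFinset.mp hbmem)
    have hGfin : ((P ∩ L) \ ↑BadF).Finite := (hP.subset Set.inter_subset_left).diff
    have hG2 : 1 < ((P ∩ L) \ ↑BadF).ncard := by
      have hsplit : (P ∩ L) ⊆ ((P ∩ L) \ ↑BadF) ∪ ↑BadF := by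
        intro x hx
        by_cases hxB : x ∈ (↑BadF : Set (ℝ×ℝ))
        · exact Or.inr hxB
        · exact Or.inl ⟨hx, hxB⟩
      have hu1 := Set.ncard_le_ncard hsplit (hGfin.union BadF.finite_toSet)
      have hu2 := Set.ncard_union_le ((P ∩ L) \ ↑BadF) (↑BadF : Set (ℝ×ℝ))
      have hu3 : (↑BadF : Set (ℝ×ℝ)).ncard = BadF.card := Set.ncard_coe_finset _
      omega
    obtain ⟨p, hp, q, hq, hpqne⟩ := (Set.one_lt_ncard hGfin).mp hG2
    have hpP : p ∈ P := hp.1.1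
    have hpL : p ∈ L := hp.1.2
    have hqP : q ∈ P := hq.1.1
    have hqL : q ∈ L := hq.1.2
    have hpS : p ∉ S := fun h => hSnotL p h hpL
    have hqS : q ∉ S := fun h => hSnotL q h hqL
    have hbad : ∀ r : ℝ × ℝ, r ∈ P → r ∈ L → r ∉ (↑BadF : Set (ℝ×ℝ)) →
        ∀ s ∈ S, ∀ t ∈ S, s ≠ t → ¬ Collinear ℝ {r, s, t} := by
      intro r hrP hrL hrB s hs t ht hst hcol
      apply hrB
      have hmem : r ∈ badSet {s, t} := by
        refine ⟨⟨hrP, hrL⟩, s, by simp, t, by simp, hst, ?_⟩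
        rw [triple_eq₃]; exact hcol
      have hepow : ({s, t} : Finset (ℝ×ℝ)) ∈ SF.powersetCard 2 := by
        rw [Finset.mem_powersetCard]
        constructor
        · intro x hx
          simp only [Finset.mem_insert, Finset.mem_singleton] at hx
          rcases hx with rfl | rfl
          · exact hSfin.mem_toFinset.mpr hs
          · exact hSfin.mem_toFinset.mpr ht
        · exact Finset.card_pair hst
      exact Finset.mem_coe.mpr (Finset.mem_biUnion.mpr ⟨_, hepow, (hbadfin _).mem_toFinset.mpr hmem⟩)
    have h1 : ∀ s ∈ S, ¬ Collinear ℝ {p, q, s} :=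
      fun s hs => pair_line_not_coll hL hpL hqL hpqne (hSnotL s hs)
    have h2 := hbad p hpP hpL hp.2
    have h3 := hbad q hqP hqL hq.2
    refine ⟨insert p (insert q S), ?_, genPos_insert_insert hpqne hgp h1 h2 h3, ?_⟩
    · rintro x hx
      simp only [Set.mem_insert_iff] at hx
      rcases hx with rfl | rfl | hx
      · exact hpP
      · exact hqP
      · exact (hSPL hx).1
    · rw [Set.ncard_insert_of_notMem (by simp [hpS, hpqne]) (hSfin.insert q),
        Set.ncard_insert_of_notMem hqS hSfin, hcard]
      omega
end

section
/- Let P be a finite set of points in the plane and suppose every point p ∈ P is in conflict with at most 2h other points of P (i.e., p lies on lines through at most 2h pairs involving a third collinear point), and every point is in conflict with at least 2 points. If P contains a subset S in general position with |P \ S| ≤ h, then |P| ≤ 2h² + h. -/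
/-- `p` is in conflict with `q` (within `P`) if some third point of `P`
is collinear with `p` and `q`. -/
def InConflict (P : Set (ℝ × ℝ)) (p q : ℝ × ℝ) : Prop :=
  p ≠ q ∧ ∃ z ∈ P, z ≠ p ∧ z ≠ q ∧ Collinear ℝ ({p, q, z} : Set (ℝ × ℝ))

theorem stmt_8 (P : Set (ℝ × ℝ)) (hP : P.Finite) (h : ℕ)
    (hub : ∀ p ∈ P, {q ∈ P | InConflict P p q}.ncard ≤ 2 * h)
    (hlb : ∀ p ∈ P, 2 ≤ {q ∈ P | InConflict P p q}.ncard)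
    (S : Set (ℝ × ℝ)) (hSP : S ⊆ P) (hgp : GenPos S)
    (hdel : (P \ S).ncard ≤ h) :
    P.ncard ≤ 2 * h ^ 2 + h := by
  classical
  have hSfin : S.Finite := hP.subset hSP
  have hDfin : (P \ S).Finite := hP.diff
  -- every point of S is in conflict with some deleted point
  have key : ∀ p : ℝ × ℝ, ∃ d, p ∈ S → d ∈ P \ S ∧ InConflict P d p := by
    intro p
    by_cases hpS : p ∈ S
    · have hpP : p ∈ P := hSP hpS
      have h2 := hlb p hpP
      have hne : {q ∈ P | InConflict P p q}.Nonempty := by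
        rw [Set.nonempty_iff_ne_empty]
        intro hemp
        rw [hemp, Set.ncard_empty] at h2
        omega
      obtain ⟨q, hqP, hpq, z, hzP, hzp, hzq, hcol⟩ := hne
      by_cases hqS : q ∈ S
      · by_cases hzS : z ∈ S
        · exact absurd hcol (hgp p hpS q hqS z hzS hpq (Ne.symm hzp) (Ne.symm hzq))
        · refine ⟨z, fun _ => ⟨⟨hzP, hzS⟩, hzp, q, hqP, Ne.symm hzq, Ne.symm hpq, ?_⟩⟩
          have : ({z, p, q} : Set (ℝ × ℝ)) = {p, q, z} := by
            ext x; simp [Set.mem_insert_iff]; tauto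
          rw [this]; exact hcol
      · refine ⟨q, fun _ => ⟨⟨hqP, hqS⟩, Ne.symm hpq, z, hzP, hzq, hzp, ?_⟩⟩
        have : ({q, p, z} : Set (ℝ × ℝ)) = {p, q, z} := by
          ext x; simp [Set.mem_insert_iff]; tauto
        rw [this]; exact hcol
    · exact ⟨p, fun hc => absurd hc hpS⟩
  choose f hf using key
  set SF := hSfin.toFinset with hSF
  set DF := hDfin.toFinset with hDF
  have hmap : ∀ p ∈ SF, f p ∈ DF := by
    intro p hp
    rw [hSF, Set.Finite.mem_toFinset] at hp
    rw [hDF, Set.Finite.mem_toFinset]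
    exact (hf p hp).1
  have hSle : SF.card ≤ DF.card * (2 * h) := by
    rw [Finset.card_eq_sum_card_fiberwise hmap]
    refine le_trans (Finset.sum_le_card_nsmul _ _ (2 * h) ?_) (by simp [mul_comm])
    intro d hd
    rw [hDF, Set.Finite.mem_toFinset] at hd
    have hdP : d ∈ P := hd.1
    have hCfin : ({q ∈ P | InConflict P d q}).Finite :=
      hP.subset (fun x hx => hx.1)
    have hsub : SF.filter (fun p => f p = d) ⊆ hCfin.toFinset := by
      intro p hp
      rw [Finset.mem_filter] at hp
      obtain ⟨hpSF, hfd⟩ := hp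
      rw [hSF, Set.Finite.mem_toFinset] at hpSF
      rw [Set.Finite.mem_toFinset]
      have := (hf p hpSF).2
      rw [hfd] at this
      exact ⟨hSP hpSF, this⟩
    calc (SF.filter (fun p => f p = d)).card ≤ hCfin.toFinset.card :=
           Finset.card_le_card hsub
      _ = ({q ∈ P | InConflict P d q}).ncard := (Set.ncard_eq_toFinset_card _ hCfin).symm
      _ ≤ 2 * h := hub d hdP
  have hScard : S.ncard = SF.card := Set.ncard_eq_toFinset_card _ hSfin
  have hDcard : (P \ S).ncard = DF.card := Set.ncard_eq_toFinset_card _ hDfin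
  have hPsplit : P.ncard ≤ S.ncard + (P \ S).ncard := by
    have hU : P = S ∪ (P \ S) := (Set.union_diff_cancel hSP).symm
    calc P.ncard = (S ∪ (P \ S)).ncard := by rw [← hU]
      _ ≤ S.ncard + (P \ S).ncard := Set.ncard_union_le _ _
  have hSb : S.ncard ≤ h * (2 * h) := by
    rw [hScard]
    calc SF.card ≤ DF.card * (2 * h) := hSle
      _ ≤ h * (2 * h) := by
          apply Nat.mul_le_mul_right
          rw [← hDcard]; exact hdel
  calc P.ncard ≤ S.ncard + (P \ S).ncard := hPsplit
    _ ≤ h * (2 * h) + h := Nat.add_le_add hSb hdel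
    _ = 2 * h ^ 2 + h := by ring
end

section
/- Let P be a finite point set partitioned as C ∪ B such that: (I) any point of B collinear with two distinct points of C lies on the segment of exactly one designated pair; (II) no point of B is collinear with another point of B and a point of C; (III) B is in general position; and no three points of C are collinear. If S ⊆ C ∪ B is in general position and b ∈ B \ S, then there exists S' ⊆ C ∪ B in general position with |S'| ≥ |S| and b ∈ S'. -/
lemma genpos_mono {S T : Set (ℝ × ℝ)} (h : T ⊆ S) (hS : GenPos S) : GenPos T :=
  fun a ha b hb c hc hab hac hbc => hS a (h ha) b (h hb) c (h hc) hab hac hbc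

lemma col_swap12 {a b c : ℝ × ℝ} (h : Collinear ℝ ({a, b, c} : Set (ℝ × ℝ))) :
    Collinear ℝ ({b, a, c} : Set (ℝ × ℝ)) := by
  rwa [Set.insert_comm] at h

lemma col_swap23 {a b c : ℝ × ℝ} (h : Collinear ℝ ({a, b, c} : Set (ℝ × ℝ))) :
    Collinear ℝ ({a, c, b} : Set (ℝ × ℝ)) := by
  rwa [Set.pair_comm] at h

lemma genpos_insert {b : ℝ × ℝ} {S : Set (ℝ × ℝ)} (hS : GenPos S)
    (h : ∀ x ∈ S, ∀ y ∈ S, x ≠ y → ¬ Collinear ℝ ({b, x, y} : Set (ℝ × ℝ))) :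
    GenPos (insert b S) := by
  intro a ha c hc d hd hac had hcd hcol
  rcases ha with rfl | ha
  · rcases hc with rfl | hc
    · exact hac rfl
    rcases hd with rfl | hd
    · exact had rfl
    exact h c hc d hd hcd hcol
  · rcases hc with rfl | hc
    · rcases hd with rfl | hd
      · exact hcd rfl
      exact h a ha d hd had (col_swap12 hcol)
    · rcases hd with rfl | hd
      · exact h a ha c hc hac (col_swap12 (col_swap23 hcol))
      exact hS a ha c hc d hd hac had hcd hcol

theorem stmt_15 (C B : Set (ℝ × ℝ)) (hC : C.Finite) (hB : B.Finite)
    (hdisj : Disjoint C B)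
    -- (I): a point of B is collinear with at most one pair of distinct points of C
    (hI : ∀ b ∈ B, ∀ p ∈ C, ∀ q ∈ C, ∀ p' ∈ C, ∀ q' ∈ C,
      p ≠ q → p' ≠ q' →
      Collinear ℝ ({b, p, q} : Set (ℝ × ℝ)) →
      Collinear ℝ ({b, p', q'} : Set (ℝ × ℝ)) →
      ({p, q} : Set (ℝ × ℝ)) = {p', q'})
    -- (II): no two distinct points of B are collinear with a point of C
    (hII : ∀ b ∈ B, ∀ b' ∈ B, b ≠ b' → ∀ p ∈ C,
      ¬ Collinear ℝ ({b, b', p} : Set (ℝ × ℝ)))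
    -- (III): B is in general position
    (hIII : GenPos B)
    -- no three points of C are collinear
    (hCgp : GenPos C)
    (S : Set (ℝ × ℝ)) (hS : S ⊆ C ∪ B) (hgp : GenPos S)
    (b : ℝ × ℝ) (hb : b ∈ B \ S) :
    ∃ S' ⊆ C ∪ B, GenPos S' ∧ S.ncard ≤ S'.ncard ∧ b ∈ S' := by

  have hPfin : (C ∪ B).Finite := hC.union hB
  have hSfin : S.Finite := hPfin.subset hS
  obtain ⟨hbB, hbS⟩ := hb
  have hbne : ∀ x ∈ S, b ≠ x := fun x hx hbx => hbS (hbx ▸ hx)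
  by_cases hex : ∃ p ∈ S, ∃ q ∈ S, p ≠ q ∧ Collinear ℝ ({b, p, q} : Set (ℝ × ℝ))
  · obtain ⟨p, hpS, q, hqS, hpq, hcol⟩ := hex
    have hpC : p ∈ C := by
      rcases hS hpS with h | hpB
      · exact h
      rcases hS hqS with hqC | hqB
      · exact absurd hcol (hII b hbB p hpB (hbne p hpS) q hqC)
      · exact absurd hcol (hIII b hbB p hpB q hqB (hbne p hpS) (hbne q hqS) hpq)
    have hqC : q ∈ C := by
      rcases hS hqS with h | hqB
      · exact h
      exact absurd (col_swap23 hcol) (hII b hbB q hqB (hbne q hqS) p hpC)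
    refine ⟨insert b (S \ {p}), ?_, ?_, ?_, Set.mem_insert _ _⟩
    · intro x hx
      rcases hx with rfl | ⟨hx, _⟩
      · exact Or.inr hbB
      · exact hS hx
    · refine genpos_insert (genpos_mono Set.diff_subset hgp) ?_
      rintro x ⟨hxS, hxp⟩ y ⟨hyS, hyp⟩ hxy hc
      simp only [Set.mem_singleton_iff] at hxp hyp
      rcases hS hxS with hxC | hxB
      · rcases hS hyS with hyC | hyB
        · have := hI b hbB p hpC q hqC x hxC y hyC hpq hxy hcol hc
          have hp : p ∈ ({x, y} : Set (ℝ × ℝ)) := this ▸ Set.mem_insert _ _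
          rcases hp with h | h
          · exact hxp h.symm
          · exact hyp h.symm
        · exact hII b hbB y hyB (hbne y hyS) x hxC (col_swap23 hc)
      · rcases hS hyS with hyC | hyB
        · exact hII b hbB x hxB (hbne x hxS) y hyC hc
        · exact hIII b hbB x hxB y hyB (hbne x hxS) (hbne y hyS) hxy hc
    · have hbnotin : b ∉ S \ {p} := fun h => hbS h.1
      rw [Set.ncard_insert_of_notMem hbnotin hSfin.diff]
      have := Set.ncard_diff_singleton_add_one hpS hSfin
      omega
  · push_neg at hex
    refine ⟨insert b S, ?_, ?_, ?_, Set.mem_insert _ _⟩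
    · intro x hx
      rcases hx with rfl | hx
      · exact Or.inr hbB
      · exact hS hx
    · exact genpos_insert hgp fun x hx y hy hxy => hex x hx y hy hxy
    · exact Set.ncard_le_ncard (Set.subset_insert _ _) (hSfin.insert b)
end
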